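/- Explicit reaction rate of the SRS model for Maxwellian distributions: σ_ij² ∫_{ℝ³}∫_{ℝ³}∫_{𝕊²₊(v_i−v_j)} [(μ_ij/μ_kl)² M_k(v_k°) M_l(v_l°) − M_i(v_i) M_j(v_j)] Θ(c₀⟨ε, v_i − v_j⟩ − Ξ_ij) ⟨ε, v_i − v_j⟩ dε dv_j dv_i = σ_ij² (2πμ_ij/(k_B T))^{1/2} [(μ_ij/μ_kl)^{1/2} c_k c_l exp(Q_R/(k_B T)) − c_i c_j] [(2k_B T/μ_ij) Γ(2, z*) − (Ξ_ij/c₀)² Γ(1, z*)], where z* = (μ_ij/(2k_B T))(Ξ_ij/c₀)². -/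

import Mathlib

/-!
Where the Heaviside factor is nonzero, the threshold makes `ω⁻` real, and the reactive collision
conserves energy up to the reaction heat:
`m_k |v_k°|² + m_l |v_l°|² = m_i |v_i|² + m_j |v_j|² - 2 Q_R`.
So the gain term is the Gaussian `exp(-(m_i |v_i|² + m_j |v_j|²)/(2 k_B T))` of the loss term,
with `c_i c_j` replaced by `√(μ_ij/μ_kl) c_k c_l e^{Q_R/(k_B T)}`, and the whole integrand becomes a
constant times `exp(-a |v_i|²) exp(-b |v_j|²) f(⟨ε, v_i - v_j⟩)` with `f(x) = x 𝟙[x ≥ Ξ_ij/c₀]`.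
Completing the square integrates out the centre of mass and leaves the Gaussian with exponent
`rmass a b = μ_ij/(2 k_B T)` in `g = v_i - v_j`. By rotation invariance the `g`-integral of
`f(⟨ε, g⟩)` is the same for every `ε`: two free Gaussian directions times
`∫_{Ξ_ij/c₀}^∞ t e^{-c t²} dt` with `c = rmass a b`; the sphere contributes its area `4π`.
-/

open MeasureTheory
open scoped RealInnerProductSpace

noncomputable section

abbrev E3 := EuclideanSpace ℝ (Fin 3)

/-- The surface measure of the unit sphere of `ℝ³`, viewed as a measure on `ℝ³`
(the pushforward along the inclusion of the sphere). -/
def sphMeasure : Measure E3 :=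
  Measure.map Subtype.val (volume : Measure E3).toSphere

/-- The Heaviside step function: `1` on `[0, ∞)`, `0` on `(−∞, 0)`. -/
def heav (x : ℝ) : ℝ := if 0 ≤ x then 1 else 0

/-- Product measure `dv ⊗ dw ⊗ dε` on `ℝ³ × ℝ³ × 𝕊²`. -/
def μ3 : Measure (E3 × E3 × E3) := (volume : Measure E3).prod ((volume : Measure E3).prod sphMeasure)

/-- Product measure `dw ⊗ dε` on `ℝ³ × 𝕊²`. -/
def μ2 : Measure (E3 × E3) := (volume : Measure E3).prod sphMeasure

/-- Reduced mass. -/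
def rmass (a b : ℝ) : ℝ := a * b / (a + b)

/-- Elastic post-collisional velocity of the first particle. -/
def vpost (mi ms : ℝ) (vi vs ε : E3) : E3 :=
  vi - (2 * (rmass mi ms / mi) * ⟪ε, vi - vs⟫) • ε

/-- Elastic post-collisional velocity of the second particle. -/
def vpost' (mi ms : ℝ) (vi vs ε : E3) : E3 :=
  vs + (2 * (rmass mi ms / ms) * ⟪ε, vi - vs⟫) • ε

/-- Reactive post-collisional velocity `v_k°`. -/
def vko (mi mj mk ml Q : ℝ) (vi vj ε : E3) : E3 :=
  (1 / (mi + mj)) • (mi • vi + mj • vj +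
    (ml * Real.sqrt (rmass mi mj / rmass mk ml)) •
      ((vi - vj) - ⟪ε, vi - vj⟫ • ε +
        Real.sqrt (⟪ε, vi - vj⟫ ^ 2 - 2 * Q / rmass mi mj) • ε))

/-- Reactive post-collisional velocity `v_l°`. -/
def vlo (mi mj mk ml Q : ℝ) (vi vj ε : E3) : E3 :=
  (1 / (mi + mj)) • (mi • vi + mj • vj -
    (mk * Real.sqrt (rmass mi mj / rmass mk ml)) •
      ((vi - vj) - ⟪ε, vi - vj⟫ • ε +
        Real.sqrt (⟪ε, vi - vj⟫ ^ 2 - 2 * Q / rmass mi mj) • ε))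

/-- Integrand of a (bi- or mono-species) elastic collision operator; it is set to `0` off
the collision hemisphere `⟨ε, v_i − v_s⟩ > 0`, so that integration of this kernel over the
whole sphere coincides with integration over the hemisphere `𝕊²₊(v_i − v_s)`. -/
def elK (σ mi ms : ℝ) (fi fs : E3 → ℝ) (vi vs ε : E3) : ℝ :=
  if 0 < ⟪ε, vi - vs⟫ then
    σ ^ 2 * (fi (vpost mi ms vi vs ε) * fs (vpost' mi ms vi vs ε) - fi vi * fs vs) *
      ⟪ε, vi - vs⟫
  else 0

/-- Integrand of the correction operator `J_ij^{b*E}` (`0` off the collision hemisphere). -/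
def corrK (σ β Ξ mi mj : ℝ) (fi fj : E3 → ℝ) (vi vj ε : E3) : ℝ :=
  if 0 < ⟪ε, vi - vj⟫ then
    β * σ ^ 2 * (fi (vpost mi mj vi vj ε) * fj (vpost' mi mj vi vj ε) - fi vi * fj vj) *
      heav (⟪ε, vi - vj⟫ - Ξ) * ⟪ε, vi - vj⟫
  else 0

/-- Integrand of the reactive operator `J_i^R` (`0` off the collision hemisphere). -/
def reK (σ β Ξ mi mj mk ml Q : ℝ) (fi fj fk fl : E3 → ℝ) (vi vj ε : E3) : ℝ :=
  if 0 < ⟪ε, vi - vj⟫ then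
    β * σ ^ 2 *
      ((rmass mi mj / rmass mk ml) ^ 2 * fk (vko mi mj mk ml Q vi vj ε) *
          fl (vlo mi mj mk ml Q vi vj ε) - fi vi * fj vj) *
      heav (⟪ε, vi - vj⟫ - Ξ) * ⟪ε, vi - vj⟫
  else 0

/-- The collision operator associated with a kernel: integrate over the partner velocity and
over the sphere. -/
def colOp (K : E3 → E3 → E3 → ℝ) (vi : E3) : ℝ :=
  ∫ vs, ∫ ε, K vi vs ε ∂sphMeasure ∂volume

/-- The upper incomplete gamma function `Γ(η, x) = ∫_x^∞ t^{η−1} e^{−t} dt`. -/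
def iGamma (η x : ℝ) : ℝ := ∫ t in Set.Ioi x, t ^ (η - 1) * Real.exp (-t)

open Real Set Filter Topology

theorem mul_norm_sq_add_mul_norm_sub_sq {V : Type*} [NormedAddCommGroup V] [InnerProductSpace ℝ V]
    {a b : ℝ} (hab : 0 < a + b) (v g : V) :
    a * ‖v‖ ^ 2 + b * ‖v - g‖ ^ 2
      = (a + b) * ‖v - (b / (a + b)) • g‖ ^ 2 + rmass a b * ‖g‖ ^ 2 := by
  simp only [rmass, norm_sub_sq_real, inner_smul_right, norm_smul, mul_pow, Real.norm_eq_abs,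
    sq_abs]
  field_simp
  ring

section Gaussian

open GaussianFourier

variable {V : Type*} [NormedAddCommGroup V] [InnerProductSpace ℝ V] [FiniteDimensional ℝ V]
  [MeasurableSpace V] [BorelSpace V]

theorem integrable_norm_mul_exp_neg_mul_sq_norm [Nontrivial V] {b : ℝ} (hb : 0 < b) :
    Integrable (fun v : V => ‖v‖ * exp (-b * ‖v‖ ^ 2)) := by
  refine (integrable_fun_norm_addHaar volume (f := fun r => r * exp (-b * r ^ 2))).2 ?_
  refine (integrableOn_rpow_mul_exp_neg_mul_sq hb (s := Module.finrank ℝ V)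
    (by linarith [(Module.finrank ℝ V).cast_nonneg (α := ℝ)])).congr_fun
    (fun r _ => ?_) measurableSet_Ioi
  rw [smul_eq_mul, ← mul_assoc, ← pow_succ, Nat.sub_add_cancel Module.finrank_pos]
  exact congrArg (· * _) (rpow_natCast r _)

theorem integral_gaussian_mul_gaussian_sub {a b : ℝ} (hab : 0 < a + b) (g : V) :
    ∫ v : V, exp (-a * ‖v‖ ^ 2) * exp (-b * ‖v - g‖ ^ 2)
      = (π / (a + b)) ^ (Module.finrank ℝ V / 2 : ℝ) * exp (-rmass a b * ‖g‖ ^ 2) := by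
  simp_rw [← exp_add, neg_mul, ← neg_add, mul_norm_sq_add_mul_norm_sub_sq hab, neg_add, exp_add,
    integral_mul_const, ← neg_mul]
  rw [integral_sub_right_eq_self (fun v => exp (-(a + b) * ‖v‖ ^ 2)),
    integral_rexp_neg_mul_sq_norm hab]

theorem integrable_gaussian_mul_gaussian_sub_mul {a b : ℝ} (hab : 0 < a + b)
    {S : V → ℝ} (hS : AEStronglyMeasurable S)
    (hSi : Integrable (fun g => exp (-rmass a b * ‖g‖ ^ 2) * S g)) :
    Integrable (fun p : V × V => exp (-a * ‖p.1‖ ^ 2) * exp (-b * ‖p.1 - p.2‖ ^ 2) * S p.2)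
      (volume.prod volume) := by
  have hconv (g : V) : Integrable (fun v : V => exp (-a * ‖v‖ ^ 2) * exp (-b * ‖v - g‖ ^ 2)) :=
    .of_integral_ne_zero <| by rw [integral_gaussian_mul_gaussian_sub hab]; positivity
  refine (integrable_prod_iff' ?_).2 ⟨.of_forall fun g => (hconv g).mul_const (S g), ?_⟩
  · exact (Continuous.aestronglyMeasurable (by fun_prop)).mul hS.comp_snd
  · refine (hSi.norm.const_mul ((π / (a + b)) ^ (Module.finrank ℝ V / 2 : ℝ))).congr
      (.of_forall fun g => ?_)
    simp only [norm_mul, Real.norm_of_nonneg (exp_pos _).le, integral_mul_const,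
      integral_gaussian_mul_gaussian_sub hab]
    ring

theorem integral_integral_gaussian_mul_gaussian_mul_comp_sub {a b : ℝ} (hab : 0 < a + b)
    {S : V → ℝ} (hS : AEStronglyMeasurable S)
    (hSi : Integrable (fun g => exp (-rmass a b * ‖g‖ ^ 2) * S g)) :
    ∫ v : V, ∫ w : V, exp (-a * ‖v‖ ^ 2) * exp (-b * ‖w‖ ^ 2) * S (v - w)
      = (π / (a + b)) ^ (Module.finrank ℝ V / 2 : ℝ) *
          ∫ g : V, exp (-rmass a b * ‖g‖ ^ 2) * S g := by
  have hsub (v : V) : ∫ w : V, exp (-a * ‖v‖ ^ 2) * exp (-b * ‖w‖ ^ 2) * S (v - w)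
      = ∫ g : V, exp (-a * ‖v‖ ^ 2) * exp (-b * ‖v - g‖ ^ 2) * S g := by
    simpa only [sub_sub_cancel] using integral_sub_left_eq_self
      (fun g : V => exp (-a * ‖v‖ ^ 2) * exp (-b * ‖v - g‖ ^ 2) * S g) volume v
  simp_rw [hsub]
  rw [integral_integral_swap (integrable_gaussian_mul_gaussian_sub_mul hab hS hSi),
    ← integral_const_mul]
  simp_rw [integral_mul_const, integral_gaussian_mul_gaussian_sub hab]
  congr 1 with g
  ring

end Gaussian

theorem integral_comp_norm_inner_eq_of_norm_eq {V : Type*} [NormedAddCommGroup V]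
    [InnerProductSpace ℝ V] [FiniteDimensional ℝ V] [MeasurableSpace V] [BorelSpace V]
    (F : ℝ → ℝ → ℝ) {ε e : V} (h : ‖e‖ = ‖ε‖) :
    ∫ g : V, F ‖g‖ ⟪ε, g⟫ = ∫ g : V, F ‖g‖ ⟪e, g⟫ := by
  set R := Submodule.reflection (ℝ ∙ (e - ε))ᗮ
  have hRe : R e = ε := Submodule.reflection_sub h
  rw [← R.measurePreserving.integral_comp R.toHomeomorph.measurableEmbedding]
  simp only [LinearIsometryEquiv.norm_map, ← hRe, LinearIsometryEquiv.inner_map_map]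

theorem integral_gaussian_mul_comp_inner {n : ℕ} (c : ℝ) (f : ℝ → ℝ)
    {ε : EuclideanSpace ℝ (Fin (n + 1))} (hε : ‖ε‖ = 1) :
    ∫ x : EuclideanSpace ℝ (Fin (n + 1)), exp (-c * ‖x‖ ^ 2) * f ⟪ε, x⟫
      = √(π / c) ^ n * ∫ t : ℝ, exp (-c * t ^ 2) * f t := by
  let e : EuclideanSpace ℝ (Fin (n + 1)) := EuclideanSpace.single 0 1
  rw [integral_comp_norm_inner_eq_of_norm_eq (fun r s => exp (-c * r ^ 2) * f s) (e := e)
    (by simp [e, hε])]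
  let g (i : Fin (n + 1)) (t : ℝ) : ℝ := if i = 0 then exp (-c * t ^ 2) * f t else exp (-c * t ^ 2)
  have hprod (y : Fin (n + 1) → ℝ) :
      exp (-c * ‖WithLp.toLp 2 y‖ ^ 2) * f ⟪e, WithLp.toLp 2 y⟫ = ∏ i, g i (y i) := by
    rw [EuclideanSpace.norm_eq, sq_sqrt (by positivity), Finset.mul_sum, exp_sum]
    simp only [norm_eq_abs, sq_abs, neg_mul, Fin.prod_univ_succ, EuclideanSpace.inner_single_left,
      ringHom_apply, one_mul, ↓reduceIte, Fin.succ_ne_zero, e, g]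
    ring
  rw [← (PiLp.volume_preserving_toLp (Fin (n + 1))).integral_comp
    (MeasurableEquiv.toLp 2 _).measurableEmbedding]
  simp only [hprod]
  rw [integral_fintype_prod_volume_eq_prod, Fin.prod_univ_succ]
  simp only [g, if_pos, Fin.succ_ne_zero, if_false, integral_gaussian, Finset.prod_const,
    Finset.card_univ, Fintype.card_fin]
  ring

theorem integral_Ici_mul_exp_neg_mul_sq {c : ℝ} (hc : 0 < c) (ξ : ℝ) :
    ∫ t in Ici ξ, t * exp (-c * t ^ 2) = exp (-c * ξ ^ 2) / (2 * c) := by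
  have hderiv (t : ℝ) (_ : t ∈ Ici ξ) :
      HasDerivAt (fun s => -exp (-c * s ^ 2) / (2 * c)) (t * exp (-c * t ^ 2)) t := by
    refine (((hasDerivAt_pow 2 t).const_mul (-c)).exp.fun_neg.div_const (2 * c)).congr_deriv ?_
    field_simp
    ring
  have hlim : Tendsto (fun s => -exp (-c * s ^ 2) / (2 * c)) atTop (𝓝 0) := by
    simpa using ((tendsto_exp_atBot.comp ((tendsto_pow_atTop two_ne_zero).const_mul_atTop_of_neg
      (neg_neg_of_pos hc)))).neg.div_const (2 * c)
  rw [integral_Ici_eq_integral_Ioi, integral_Ioi_of_hasDerivAt_of_tendsto' hderiv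
    (integrable_mul_exp_neg_mul_sq hc).integrableOn hlim]
  ring

theorem iGamma_one (x : ℝ) : iGamma 1 x = exp (-x) := by
  simp only [iGamma, sub_self, rpow_zero, one_mul, integral_exp_neg_Ioi]

theorem iGamma_two {x : ℝ} (hx : 0 ≤ x) : iGamma 2 x = (x + 1) * exp (-x) := by
  have hderiv (t : ℝ) (_ : t ∈ Ici x) :
      HasDerivAt (fun s => -((s + 1) * exp (-s))) (t * exp (-t)) t := by
    refine (((hasDerivAt_id t).add_const 1).fun_mul (hasDerivAt_id t).fun_neg.exp).fun_neg
      |>.congr_deriv ?_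
    simp only [id]
    ring
  have hint : IntegrableOn (fun t => t * exp (-t)) (Ioi x) :=
    ((Real.GammaIntegral_convergent (s := 2) two_pos).mono_set (Ioi_subset_Ioi hx)).congr_fun
      (fun t _ => by norm_num [mul_comm]) measurableSet_Ioi
  have hlim : Tendsto (fun s => -((s + 1) * exp (-s))) atTop (𝓝 0) := by
    simpa [add_mul] using ((tendsto_pow_mul_exp_neg_atTop_nhds_zero 1).add
      tendsto_exp_neg_atTop_nhds_zero).neg
  rw [iGamma, show (2 : ℝ) - 1 = 1 by norm_num]
  simp only [rpow_one]
  rw [integral_Ioi_of_hasDerivAt_of_tendsto' hderiv hint hlim]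
  ring

instance isFiniteMeasure_sphMeasure : IsFiniteMeasure sphMeasure := by
  unfold sphMeasure; infer_instance

theorem sphMeasure_ae_norm_eq_one : ∀ᵐ ε ∂sphMeasure, ‖ε‖ = 1 :=
  (ae_map_iff measurable_subtype_coe.aemeasurable
    (measurableSet_eq_fun measurable_norm measurable_const)).2 <|
      .of_forall fun ε => mem_sphere_zero_iff_norm.1 ε.2

theorem sphMeasure_real_univ : sphMeasure.real univ = 4 * π := by
  rw [sphMeasure, measureReal_def, Measure.map_apply measurable_subtype_coe .univ,
    preimage_univ, Measure.toSphere_apply_univ, EuclideanSpace.volume_ball_fin_three]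
  simp only [finrank_euclideanSpace, Fintype.card_fin, ENNReal.ofReal_one, one_pow, one_mul]
  rw [ENNReal.toReal_mul, ENNReal.toReal_ofReal (by positivity)]
  norm_num
  ring

section SphericalAverage

variable {f : ℝ → ℝ}

theorem integrable_gaussian_mul_comp_inner_sph (hf : Measurable f) (hfle : ∀ t, |f t| ≤ |t|)
    {c : ℝ} (hc : 0 < c) :
    Integrable (fun p : E3 × E3 => exp (-c * ‖p.1‖ ^ 2) * f ⟪p.2, p.1⟫)
      ((volume : Measure E3).prod sphMeasure) := by
  have hunit : ∀ᵐ p ∂(volume : Measure E3).prod sphMeasure, ‖p.2‖ = 1 :=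
    (Measure.ae_prod_iff_ae_ae (measurableSet_eq_fun (by fun_prop) measurable_const)).2 <|
      .of_forall fun _ => sphMeasure_ae_norm_eq_one
  refine ((integrable_norm_mul_exp_neg_mul_sq_norm hc).mul_prod (integrable_const 1)).mono' ?_ ?_
  · exact (Continuous.aestronglyMeasurable (by fun_prop)).mul
      (hf.comp (by fun_prop)).aestronglyMeasurable
  · filter_upwards [hunit] with p hp
    rw [norm_mul, Real.norm_of_nonneg (exp_pos _).le, mul_one, mul_comm, Real.norm_eq_abs]
    gcongr
    exact (hfle _).trans ((abs_real_inner_le_norm _ _).trans_eq (by rw [hp, one_mul]))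

theorem integrable_gaussian_mul_integral_sph (hf : Measurable f)
    (hfle : ∀ t, |f t| ≤ |t|) {c : ℝ} (hc : 0 < c) :
    Integrable (fun g : E3 => exp (-c * ‖g‖ ^ 2) * ∫ ε, f ⟪ε, g⟫ ∂sphMeasure) := by
  simpa only [integral_const_mul] using
    (integrable_gaussian_mul_comp_inner_sph hf hfle hc).integral_prod_left

theorem integral_gaussian_mul_integral_sph (hf : Measurable f) (hfle : ∀ t, |f t| ≤ |t|)
    {c : ℝ} (hc : 0 < c) :
    ∫ g : E3, exp (-c * ‖g‖ ^ 2) * ∫ ε, f ⟪ε, g⟫ ∂sphMeasure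
      = 4 * π * (π / c) * ∫ t : ℝ, exp (-c * t ^ 2) * f t := by
  simp_rw [← integral_const_mul (exp (-c * ‖_‖ ^ 2))]
  rw [integral_integral_swap (integrable_gaussian_mul_comp_inner_sph hf hfle hc),
    integral_congr_ae (g := fun _ => (π / c) * ∫ t : ℝ, exp (-c * t ^ 2) * f t) ?_,
    integral_const, smul_eq_mul, sphMeasure_real_univ]
  · ring
  filter_upwards [sphMeasure_ae_norm_eq_one] with ε hε
  rw [integral_gaussian_mul_comp_inner (n := 2) c f hε, sq_sqrt (by positivity)]

end SphericalAverage

theorem integral_integral_gaussian_mul_integral_sph_indicator {a b : ℝ} (ha : 0 < a)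
    (hb : 0 < b) (ξ : ℝ) :
    ∫ vi : E3, ∫ vj : E3, exp (-a * ‖vi‖ ^ 2) * exp (-b * ‖vj‖ ^ 2) *
        ∫ ε, (Ici ξ).indicator id ⟪ε, vi - vj⟫ ∂sphMeasure
      = (π / (a + b)) ^ ((3 : ℝ) / 2) * (4 * π * (π / rmass a b) *
          (exp (-rmass a b * ξ ^ 2) / (2 * rmass a b))) := by
  have hc : 0 < rmass a b := by unfold rmass; positivity
  have hf : Measurable ((Ici ξ).indicator id) := measurable_id.indicator measurableSet_Ici
  have hfle (t : ℝ) : |(Ici ξ).indicator id t| ≤ |t| := by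
    by_cases ht : t ∈ Ici ξ <;> simp [ht]
  have hS : StronglyMeasurable (fun g : E3 => ∫ ε, (Ici ξ).indicator id ⟪ε, g⟫ ∂sphMeasure) :=
    StronglyMeasurable.integral_prod_right'
      (f := fun p : E3 × E3 => (Ici ξ).indicator id ⟪p.2, p.1⟫)
      (hf.comp (by fun_prop)).stronglyMeasurable
  have hline : ∫ t : ℝ, exp (-rmass a b * t ^ 2) * (Ici ξ).indicator id t
      = exp (-rmass a b * ξ ^ 2) / (2 * rmass a b) := by
    have (t : ℝ) : exp (-rmass a b * t ^ 2) * (Ici ξ).indicator id t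
        = (Ici ξ).indicator (fun t => t * exp (-rmass a b * t ^ 2)) t := by
      rw [indicator_mul_left, mul_comm]; rfl
    simp_rw [this]
    rw [integral_indicator measurableSet_Ici, integral_Ici_mul_exp_neg_mul_sq hc]
  rw [integral_integral_gaussian_mul_gaussian_mul_comp_sub (by positivity) hS.aestronglyMeasurable
    (integrable_gaussian_mul_integral_sph hf hfle hc),
    integral_gaussian_mul_integral_sph hf hfle hc, hline, finrank_euclideanSpace_fin]
  norm_num

theorem kinetic_energy_center_of_mass {V : Type*} [NormedAddCommGroup V] [InnerProductSpace ℝ V]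
    {m m' : ℝ} (hm : m + m' ≠ 0) (P u : V) :
    m * ‖(1 / (m + m')) • (P + m' • u)‖ ^ 2 + m' * ‖(1 / (m + m')) • (P - m • u)‖ ^ 2
      = ‖P‖ ^ 2 / (m + m') + rmass m m' * ‖u‖ ^ 2 := by
  simp only [rmass, norm_smul, mul_pow, norm_add_sq_real, norm_sub_sq_real, inner_smul_right,
    Real.norm_eq_abs, sq_abs]
  field_simp
  ring

theorem norm_sq_sub_inner_smul_add_smul {V : Type*} [NormedAddCommGroup V]
    [InnerProductSpace ℝ V] {ε : V} (hε : ‖ε‖ = 1) (g : V) (ω : ℝ) :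
    ‖g - ⟪ε, g⟫ • ε + ω • ε‖ ^ 2 = ‖g‖ ^ 2 - ⟪ε, g⟫ ^ 2 + ω ^ 2 := by
  rw [sub_add, ← sub_smul, norm_sub_sq_real, norm_smul, inner_smul_right, real_inner_comm, hε,
    Real.norm_eq_abs, mul_one, sq_abs]
  ring

theorem reactive_energy_conservation {mi mj mk ml : ℝ} (hmi : 0 < mi) (hmj : 0 < mj)
    (hmk : 0 < mk) (hml : 0 < ml) (hM : mi + mj = mk + ml) {Q : ℝ} {vi vj ε : E3} (hε : ‖ε‖ = 1)
    (hx : 2 * Q / rmass mi mj ≤ ⟪ε, vi - vj⟫ ^ 2) :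
    mk * ‖vko mi mj mk ml Q vi vj ε‖ ^ 2 + ml * ‖vlo mi mj mk ml Q vi vj ε‖ ^ 2
      = mi * ‖vi‖ ^ 2 + mj * ‖vj‖ ^ 2 - 2 * Q := by
  set μ := rmass mi mj
  set s := √(μ / rmass mk ml)
  set ω := √(⟪ε, vi - vj⟫ ^ 2 - 2 * Q / μ)
  set w := vi - vj - ⟪ε, vi - vj⟫ • ε + ω • ε
  have hμ : 0 < μ := by unfold μ rmass; positivity
  have hμ' : 0 < rmass mk ml := by unfold rmass; positivity
  have hcm : vi = (1 / (mi + mj)) • ((mi • vi + mj • vj) + mj • (vi - vj)) ∧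
      vj = (1 / (mi + mj)) • ((mi • vi + mj • vj) - mi • (vi - vj)) := by
    constructor <;> (match_scalars <;> field_simp <;> ring)
  have hpost : mk * ‖vko mi mj mk ml Q vi vj ε‖ ^ 2 + ml * ‖vlo mi mj mk ml Q vi vj ε‖ ^ 2
      = ‖mi • vi + mj • vj‖ ^ 2 / (mi + mj) + rmass mk ml * ‖s • w‖ ^ 2 := by
    rw [vko, vlo, mul_smul, mul_smul, hM, kinetic_energy_center_of_mass (by positivity)]
  have hpre := kinetic_energy_center_of_mass (m := mi) (m' := mj) (by positivity)
    (mi • vi + mj • vj) (vi - vj)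
  rw [← hcm.1, ← hcm.2] at hpre
  rw [hpost, hpre, norm_smul, mul_pow, Real.norm_eq_abs, sq_abs, sq_sqrt (by positivity),
    norm_sq_sub_inner_smul_add_smul hε, sq_sqrt (by linarith)]
  field_simp
  ring

def maxwellian (n m kB T : ℝ) (v : E3) : ℝ :=
  n * (m / (2 * π * kB * T)) ^ ((3 : ℝ) / 2) * exp (-(m * ‖v‖ ^ 2) / (2 * kB * T))

theorem maxwellian_mul_maxwellian (n n' m m' kB T : ℝ) (v w : E3) :
    maxwellian n m kB T v * maxwellian n' m' kB T w
      = n * n' * ((m / (2 * π * kB * T)) ^ ((3 : ℝ) / 2) * (m' / (2 * π * kB * T)) ^ ((3 : ℝ) / 2))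
        * exp (-(m * ‖v‖ ^ 2 + m' * ‖w‖ ^ 2) / (2 * kB * T)) := by
  rw [maxwellian, maxwellian, neg_add, add_div, exp_add]
  ring

theorem rmass_div_rmass {mi mj mk ml : ℝ} (hM : mi + mj = mk + ml) (hM0 : mk + ml ≠ 0) :
    rmass mi mj / rmass mk ml = mi * mj / (mk * ml) := by
  rw [rmass, rmass, hM, div_div_div_cancel_right₀ hM0]

theorem sq_mul_rpow_three_halves {r x : ℝ} (hr : 0 ≤ r) (hx : 0 ≤ x) :
    r ^ 2 * x ^ ((3 : ℝ) / 2) = √r * (r * x) ^ ((3 : ℝ) / 2) := by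
  rw [mul_rpow hr hx, sqrt_eq_rpow, ← mul_assoc,
    ← rpow_add_of_nonneg hr (by norm_num) (by norm_num)]
  norm_num

theorem reactive_maxwellian_gain {mi mj mk ml : ℝ} (hmi : 0 < mi) (hmj : 0 < mj)
    (hmk : 0 < mk) (hml : 0 < ml) (hM : mi + mj = mk + ml) {Q kB T : ℝ} (hkB : 0 < kB)
    (hT : 0 < T) (ck cl : ℝ) {vi vj ε : E3} (hε : ‖ε‖ = 1)
    (hx : 2 * Q / rmass mi mj ≤ ⟪ε, vi - vj⟫ ^ 2) :
    (rmass mi mj / rmass mk ml) ^ 2 * maxwellian ck mk kB T (vko mi mj mk ml Q vi vj ε) *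
        maxwellian cl ml kB T (vlo mi mj mk ml Q vi vj ε)
      = √(rmass mi mj / rmass mk ml) * (ck * cl) * exp (Q / (kB * T)) *
        ((mi / (2 * π * kB * T)) ^ ((3 : ℝ) / 2) * (mj / (2 * π * kB * T)) ^ ((3 : ℝ) / 2))
        * exp (-(mi * ‖vi‖ ^ 2 + mj * ‖vj‖ ^ 2) / (2 * kB * T)) := by
  have hmass : (rmass mi mj / rmass mk ml) ^ 2 *
      ((mk / (2 * π * kB * T)) ^ ((3 : ℝ) / 2) * (ml / (2 * π * kB * T)) ^ ((3 : ℝ) / 2))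
      = √(rmass mi mj / rmass mk ml) *
        ((mi / (2 * π * kB * T)) ^ ((3 : ℝ) / 2) * (mj / (2 * π * kB * T)) ^ ((3 : ℝ) / 2)) := by
    have hr : rmass mi mj / rmass mk ml = mi * mj / (mk * ml) := rmass_div_rmass hM (by positivity)
    rw [← mul_rpow (by positivity) (by positivity), ← mul_rpow (by positivity) (by positivity),
      sq_mul_rpow_three_halves (by rw [hr]; positivity) (by positivity), hr]
    congr 2
    field_simp
  have hexp : exp (-(mk * ‖vko mi mj mk ml Q vi vj ε‖ ^ 2 + ml * ‖vlo mi mj mk ml Q vi vj ε‖ ^ 2)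
      / (2 * kB * T))
      = exp (Q / (kB * T)) * exp (-(mi * ‖vi‖ ^ 2 + mj * ‖vj‖ ^ 2) / (2 * kB * T)) := by
    rw [reactive_energy_conservation hmi hmj hmk hml hM hε hx, ← exp_add]
    congr 1
    field_simp
    ring
  rw [mul_assoc, maxwellian_mul_maxwellian, hexp]
  linear_combination (ck * cl * exp (Q / (kB * T)) *
    exp (-(mi * ‖vi‖ ^ 2 + mj * ‖vj‖ ^ 2) / (2 * kB * T))) * hmass

theorem ite_pos_mul_heav_mul_eq_indicator {c0 Ξ : ℝ} (hc0 : 0 < c0) (hΞ : 0 ≤ Ξ) (y x : ℝ) :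
    (if 0 < x then y * heav (c0 * x - Ξ) * x else 0) = y * (Ici (Ξ / c0)).indicator id x := by
  have hξ : x ∈ Ici (Ξ / c0) ↔ 0 ≤ c0 * x - Ξ := by rw [mem_Ici, div_le_iff₀' hc0, sub_nonneg]
  by_cases hx : x ∈ Ici (Ξ / c0)
  · rw [indicator_of_mem hx, id]
    split_ifs with hpos
    · rw [heav, if_pos (hξ.1 hx), mul_one]
    · rw [le_antisymm (not_lt.1 hpos) ((div_nonneg hΞ hc0.le).trans hx), mul_zero]
  · rw [indicator_of_notMem hx, mul_zero]
    split_ifs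
    · rw [heav, if_neg (mt hξ.2 hx), mul_zero, zero_mul]
    · rfl

theorem reaction_integrand_eq {mi mj mk ml : ℝ} (hmi : 0 < mi) (hmj : 0 < mj)
    (hmk : 0 < mk) (hml : 0 < ml) (hM : mi + mj = mk + ml) {Q kB T c0 Ξ : ℝ} (hkB : 0 < kB)
    (hT : 0 < T) (hc0 : 0 < c0) (hΞ : 0 ≤ Ξ) (hthr : 2 * Q ≤ rmass mi mj * (Ξ / c0) ^ 2)
    (σ ci cj ck cl : ℝ) {vi vj ε : E3} (hε : ‖ε‖ = 1) :
    (if 0 < ⟪ε, vi - vj⟫ then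
        σ ^ 2 * ((rmass mi mj / rmass mk ml) ^ 2 *
            maxwellian ck mk kB T (vko mi mj mk ml Q vi vj ε) *
            maxwellian cl ml kB T (vlo mi mj mk ml Q vi vj ε) -
          maxwellian ci mi kB T vi * maxwellian cj mj kB T vj) *
        heav (c0 * ⟪ε, vi - vj⟫ - Ξ) * ⟪ε, vi - vj⟫
      else 0)
    = σ ^ 2 * (√(rmass mi mj / rmass mk ml) * (ck * cl) * exp (Q / (kB * T)) - ci * cj) *
        ((mi / (2 * π * kB * T)) ^ ((3 : ℝ) / 2) * (mj / (2 * π * kB * T)) ^ ((3 : ℝ) / 2)) *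
        (exp (-(mi / (2 * kB * T)) * ‖vi‖ ^ 2) * exp (-(mj / (2 * kB * T)) * ‖vj‖ ^ 2) *
          (Ici (Ξ / c0)).indicator id ⟪ε, vi - vj⟫) := by
  rw [ite_pos_mul_heav_mul_eq_indicator hc0 hΞ]
  by_cases hx : ⟪ε, vi - vj⟫ ∈ Ici (Ξ / c0)
  · have hμ : 0 < rmass mi mj := by unfold rmass; positivity
    have hsq : (Ξ / c0) ^ 2 ≤ ⟪ε, vi - vj⟫ ^ 2 := pow_le_pow_left₀ (by positivity) hx 2
    have hen : 2 * Q / rmass mi mj ≤ ⟪ε, vi - vj⟫ ^ 2 := by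
      rw [div_le_iff₀' hμ]; nlinarith
    have hexp : exp (-(mi * ‖vi‖ ^ 2 + mj * ‖vj‖ ^ 2) / (2 * kB * T))
        = exp (-(mi / (2 * kB * T)) * ‖vi‖ ^ 2) * exp (-(mj / (2 * kB * T)) * ‖vj‖ ^ 2) := by
      rw [← exp_add]; ring_nf
    rw [reactive_maxwellian_gain hmi hmj hmk hml hM hkB hT ck cl hε hen,
      maxwellian_mul_maxwellian, hexp]
    ring
  · rw [indicator_of_notMem hx, mul_zero, mul_zero, mul_zero]

theorem maxwellian_rate_prefactor_eq {mi mj kB T a b : ℝ} (hmi : 0 < mi) (hmj : 0 < mj)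
    (hkB : 0 < kB) (hT : 0 < T) (ha : a = mi / (2 * kB * T)) (hb : b = mj / (2 * kB * T))
    (ξ : ℝ) :
    (mi / (2 * π * kB * T)) ^ ((3 : ℝ) / 2) * (mj / (2 * π * kB * T)) ^ ((3 : ℝ) / 2) *
        ((π / (a + b)) ^ ((3 : ℝ) / 2) *
          (4 * π * (π / rmass a b) * (exp (-rmass a b * ξ ^ 2) / (2 * rmass a b))))
      = √(2 * π * rmass mi mj / (kB * T)) *
          ((2 * kB * T / rmass mi mj) * iGamma 2 (rmass mi mj / (2 * kB * T) * ξ ^ 2)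
            - ξ ^ 2 * iGamma 1 (rmass mi mj / (2 * kB * T) * ξ ^ 2)) := by
  set c := rmass mi mj / (2 * kB * T)
  have hc : 0 < c := by unfold c rmass; positivity
  have hcab : rmass a b = c := by
    unfold c rmass; subst ha hb; field_simp
  have hmass : (mi / (2 * π * kB * T)) ^ ((3 : ℝ) / 2) * (mj / (2 * π * kB * T)) ^ ((3 : ℝ) / 2) *
      (π / (a + b)) ^ ((3 : ℝ) / 2) = (c / π) ^ ((3 : ℝ) / 2) := by
    subst ha hb
    rw [← mul_rpow (by positivity) (by positivity), ← mul_rpow (by positivity) (by positivity)]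
    congr 1
    unfold c rmass
    field_simp
  set u := √(π * c)
  have hrate : √(2 * π * rmass mi mj / (kB * T)) = 2 * u := by
    rw [show 2 * π * rmass mi mj / (kB * T) = 2 ^ 2 * (π * c) by unfold c; field_simp,
      sqrt_mul (by positivity), sqrt_sq zero_le_two]
  have hpow : (c / π) ^ ((3 : ℝ) / 2) = c / π * (u / π) := by
    rw [show (3 : ℝ) / 2 = 1 + 1 / 2 by norm_num, rpow_add (by positivity), rpow_one,
      ← sqrt_eq_rpow, show c / π = π * c / π ^ 2 by field_simp, sqrt_div' _ (by positivity),
      sqrt_sq pi_pos.le]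
  rw [hcab, ← mul_assoc, hmass, hpow, hrate, iGamma_two (by positivity), iGamma_one,
    show 2 * kB * T / rmass mi mj = 1 / c by unfold c; field_simp]
  field_simp
  ring

theorem srs_reaction_rate_for_maxwellians_general
    (mi mj mk ml : ℝ) (hmi : 0 < mi) (hmj : 0 < mj) (hmk : 0 < mk) (hml : 0 < ml)
    (hM : mi + mj = mk + ml)
    (QR : ℝ) (σij : ℝ)
    (T kB c0 : ℝ) (hT : 0 < T) (hkB : 0 < kB) (hc0 : 0 < c0)
    (Ξij : ℝ) (hΞ : 0 ≤ Ξij) (hthr : 2 * QR ≤ rmass mi mj * (Ξij / c0) ^ 2)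
    (ci cj ck cl : ℝ)
    (Mi Mj Mk Ml : E3 → ℝ)
    (hMi : Mi = fun v => ci * (mi / (2 * Real.pi * kB * T)) ^ ((3 : ℝ) / 2) *
      Real.exp (-(mi * ‖v‖ ^ 2) / (2 * kB * T)))
    (hMj : Mj = fun v => cj * (mj / (2 * Real.pi * kB * T)) ^ ((3 : ℝ) / 2) *
      Real.exp (-(mj * ‖v‖ ^ 2) / (2 * kB * T)))
    (hMk : Mk = fun v => ck * (mk / (2 * Real.pi * kB * T)) ^ ((3 : ℝ) / 2) *
      Real.exp (-(mk * ‖v‖ ^ 2) / (2 * kB * T)))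
    (hMl : Ml = fun v => cl * (ml / (2 * Real.pi * kB * T)) ^ ((3 : ℝ) / 2) *
      Real.exp (-(ml * ‖v‖ ^ 2) / (2 * kB * T))) :
    (∫ vi, ∫ vj, ∫ ε,
      (if 0 < ⟪ε, vi - vj⟫ then
        σij ^ 2 *
          ((rmass mi mj / rmass mk ml) ^ 2 * Mk (vko mi mj mk ml QR vi vj ε) *
              Ml (vlo mi mj mk ml QR vi vj ε) - Mi vi * Mj vj) *
          heav (c0 * ⟪ε, vi - vj⟫ - Ξij) * ⟪ε, vi - vj⟫
      else 0) ∂sphMeasure ∂volume ∂volume)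
    = σij ^ 2 * Real.sqrt (2 * Real.pi * rmass mi mj / (kB * T)) *
        (Real.sqrt (rmass mi mj / rmass mk ml) * (ck * cl) * Real.exp (QR / (kB * T))
          - ci * cj) *
        ((2 * kB * T / rmass mi mj) *
            iGamma 2 (rmass mi mj / (2 * kB * T) * (Ξij / c0) ^ 2)
          - (Ξij / c0) ^ 2 *
            iGamma 1 (rmass mi mj / (2 * kB * T) * (Ξij / c0) ^ 2)) := by
  obtain rfl : Mi = maxwellian ci mi kB T := hMi
  obtain rfl : Mj = maxwellian cj mj kB T := hMj
  obtain rfl : Mk = maxwellian ck mk kB T := hMk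
  obtain rfl : Ml = maxwellian cl ml kB T := hMl
  have ha : 0 < mi / (2 * kB * T) := by positivity
  have hb : 0 < mj / (2 * kB * T) := by positivity
  rw [integral_congr_ae (.of_forall fun vi => integral_congr_ae (.of_forall fun vj =>
    integral_congr_ae (sphMeasure_ae_norm_eq_one.mono fun ε hε =>
      reaction_integrand_eq hmi hmj hmk hml hM hkB hT hc0 hΞ hthr σij ci cj ck cl hε)))]
  simp_rw [integral_const_mul]
  rw [integral_integral_gaussian_mul_integral_sph_indicator ha hb, mul_assoc,
    maxwellian_rate_prefactor_eq hmi hmj hkB hT rfl rfl]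
  ring

/-- Explicit reaction rate of the SRS model evaluated on centered
Maxwellian distributions. -/
theorem srs_reaction_rate_for_maxwellians
    (mi mj mk ml : ℝ) (hmi : 0 < mi) (hmj : 0 < mj) (hmk : 0 < mk) (hml : 0 < ml)
    (hM : mi + mj = mk + ml)
    (QR : ℝ) (σij : ℝ) (hσ : 0 < σij)
    (T kB c0 : ℝ) (hT : 0 < T) (hkB : 0 < kB) (hc0 : 0 < c0)
    (Ξij : ℝ) (hΞ : 0 ≤ Ξij) (hthr : 2 * QR ≤ rmass mi mj * (Ξij / c0) ^ 2)
    (ci cj ck cl : ℝ) (hci : 0 ≤ ci) (hcj : 0 ≤ cj) (hck : 0 ≤ ck) (hcl : 0 ≤ cl)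
    (Mi Mj Mk Ml : E3 → ℝ)
    (hMi : Mi = fun v => ci * (mi / (2 * Real.pi * kB * T)) ^ ((3 : ℝ) / 2) *
      Real.exp (-(mi * ‖v‖ ^ 2) / (2 * kB * T)))
    (hMj : Mj = fun v => cj * (mj / (2 * Real.pi * kB * T)) ^ ((3 : ℝ) / 2) *
      Real.exp (-(mj * ‖v‖ ^ 2) / (2 * kB * T)))
    (hMk : Mk = fun v => ck * (mk / (2 * Real.pi * kB * T)) ^ ((3 : ℝ) / 2) *
      Real.exp (-(mk * ‖v‖ ^ 2) / (2 * kB * T)))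
    (hMl : Ml = fun v => cl * (ml / (2 * Real.pi * kB * T)) ^ ((3 : ℝ) / 2) *
      Real.exp (-(ml * ‖v‖ ^ 2) / (2 * kB * T))) :
    (∫ vi, ∫ vj, ∫ ε,
      (if 0 < ⟪ε, vi - vj⟫ then
        σij ^ 2 *
          ((rmass mi mj / rmass mk ml) ^ 2 * Mk (vko mi mj mk ml QR vi vj ε) *
              Ml (vlo mi mj mk ml QR vi vj ε) - Mi vi * Mj vj) *
          heav (c0 * ⟪ε, vi - vj⟫ - Ξij) * ⟪ε, vi - vj⟫
      else 0) ∂sphMeasure ∂volume ∂volume)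
    = σij ^ 2 * Real.sqrt (2 * Real.pi * rmass mi mj / (kB * T)) *
        (Real.sqrt (rmass mi mj / rmass mk ml) * (ck * cl) * Real.exp (QR / (kB * T))
          - ci * cj) *
        ((2 * kB * T / rmass mi mj) *
            iGamma 2 (rmass mi mj / (2 * kB * T) * (Ξij / c0) ^ 2)
          - (Ξij / c0) ^ 2 *
            iGamma 1 (rmass mi mj / (2 * kB * T) * (Ξij / c0) ^ 2)) :=
  srs_reaction_rate_for_maxwellians_general mi mj mk ml hmi hmj hmk hml hM QR σij T kB c0 hT hkB hc0
    Ξij hΞ hthr ci cj ck cl Mi Mj Mk Ml hMi hMj hMk hMl
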